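/- arXiv:2011.05560 — 2 statements merged into one kernel-verified Lean document; each statement's English description precedes it below -/
import Mathlib

section
/- Let (g, [·,...,·]) be an n-Lie algebra with a representation (V, ρ). Let α, β: g → g be commuting endomorphisms of g, and let α_V, β_V: V → V be commuting linear maps such that α_V∘ρ(X) = ρ(α̃(X))∘α_V and β_V∘ρ(X) = ρ(β̃(X))∘β_V for all X ∈ ∧^{n−1}g, where α̃(X)=α(x₁)∧...∧α(x_{n−1}) and β̃(X)=β(x₁)∧...∧β(x_{n−1}). Then (V, ρ̃ := β_V∘ρ, α_V, β_V) is a representation of the n-BiHom-Lie algebra (g, [·,...,·]_{α,β}, α, β), where [x₁,...,xₙ]_{α,β} = [α(x₁),...,α(x_{n−1}),β(xₙ)]. -/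
open Function Finset Module

universe u v w

/-- Twist a tuple: apply `a` to the last coordinate and `b` to all the other coordinates,
so that `twMap a b x = (b x₁, …, b xₙ₋₁, a xₙ)`. -/
def twMap {g : Type v} (a b : g → g) {m : ℕ} (x : Fin (m + 1) → g) : Fin (m + 1) → g :=
  fun i => if i = Fin.last m then a (x i) else b (x i)

/-- An `n`-BiHom-Lie algebra over `K`, where the arity of the bracket is `n = m + 1`. -/
structure NBiHomLie (K : Type u) [Field K] (m : ℕ) (g : Type v)
    [AddCommGroup g] [Module K g] where
  br : MultilinearMap K (fun _ : Fin (m + 1) => g) g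
  α : g →ₗ[K] g
  β : g →ₗ[K] g
  comm : ∀ z, α (β z) = β (α z)
  alpha_br : ∀ x : Fin (m + 1) → g, α (br x) = br fun i => α (x i)
  beta_br : ∀ x : Fin (m + 1) → g, β (br x) = br fun i => β (x i)
  skew : ∀ (x : Fin (m + 1) → g) (i j : Fin (m + 1)), (i : ℕ) + 1 = (j : ℕ) →
    br (twMap ⇑α ⇑β x) = - br (twMap ⇑α ⇑β (x ∘ Equiv.swap i j))
  jacobi : ∀ (x : Fin m → g) (y : Fin (m + 1) → g),
    br (Fin.snoc (fun i => β (β (x i))) (br (twMap ⇑α ⇑β y))) =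
      ∑ k : Fin (m + 1), ((-1 : K) ^ (m - (k : ℕ))) •
        br (Fin.snoc (fun i => β (β (y (k.succAbove i))))
          (br (twMap ⇑α ⇑β (Fin.snoc x (y k)))))

/-- A representation of an `n`-BiHom-Lie algebra (`n = m + 2`) on a vector space `V`. -/
structure NRep {K : Type u} [Field K] {m : ℕ} {g : Type v} [AddCommGroup g] [Module K g]
    (L : NBiHomLie K (m + 1) g) (V : Type w) [AddCommGroup V] [Module K V] where
  ρ : MultilinearMap K (fun _ : Fin (m + 1) => g) (Module.End K V)
  αV : V →ₗ[K] V
  βV : V →ₗ[K] V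
  rep1 : ∀ x : Fin (m + 1) → g, ρ (fun i => L.α (x i)) ∘ₗ αV = αV ∘ₗ ρ x
  rep2 : ∀ x : Fin (m + 1) → g, ρ (fun i => L.β (x i)) ∘ₗ βV = βV ∘ₗ ρ x
  rep3 : ∀ x y : Fin (m + 1) → g,
    ρ (fun i => L.α (L.β (x i))) ∘ₗ ρ y - ρ (fun i => L.β (y i)) ∘ₗ ρ (fun i => L.α (x i)) =
      ∑ i : Fin (m + 1),
        ρ (Function.update (fun j => L.β (y j)) i
            (L.br (Fin.snoc (fun j => L.β (x j)) (y i)))) ∘ₗ βV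
  rep4 : ∀ x y : Fin (m + 1) → g,
    ρ (Fin.snoc (fun j : Fin m => L.β (y j.succ))
        (L.br (Fin.snoc (fun j => L.β (x j)) (y 0)))) ∘ₗ βV =
      (∑ i : Fin (m + 1), ((-1 : K) ^ (m + 1 - (i : ℕ))) •
        (ρ (Fin.snoc (fun j : Fin m => L.α (L.β (x (i.succAbove j)))) (L.β (y 0))) ∘ₗ
          ρ (Fin.snoc (fun j : Fin m => y j.succ) (L.α (x i))))) +
        ρ (fun i => L.α (L.β (x i))) ∘ₗ ρ y
/-- An `n`-Lie algebra (Filippov algebra) over `K`, where the arity is `n = m + 1`. -/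
structure NLie (K : Type u) [Field K] (m : ℕ) (g : Type v)
    [AddCommGroup g] [Module K g] where
  br : MultilinearMap K (fun _ : Fin (m + 1) => g) g
  skew : ∀ (x : Fin (m + 1) → g) (i j : Fin (m + 1)), i ≠ j →
    br (x ∘ Equiv.swap i j) = - br x
  filippov : ∀ (x : Fin m → g) (y : Fin (m + 1) → g),
    br (Fin.snoc x (br y)) =
      ∑ i : Fin (m + 1), br (Function.update y i (br (Fin.snoc x (y i))))

/-- A representation of an `n`-Lie algebra (`n = m + 2`) on a vector space `V`. -/
structure NLieRep {K : Type u} [Field K] {m : ℕ} {g : Type v} [AddCommGroup g] [Module K g]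
    (L : NLie K (m + 1) g) (V : Type w) [AddCommGroup V] [Module K V] where
  ρ : MultilinearMap K (fun _ : Fin (m + 1) => g) (Module.End K V)
  repa : ∀ x y : Fin (m + 1) → g,
    ρ x ∘ₗ ρ y - ρ y ∘ₗ ρ x =
      ∑ i : Fin (m + 1), ρ (Function.update y i (L.br (Fin.snoc x (y i))))
  repb : ∀ x y : Fin (m + 1) → g,
    ρ (Fin.snoc (fun j : Fin m => y j.succ) (L.br (Fin.snoc x (y 0)))) =
      (∑ i : Fin (m + 1), ((-1 : K) ^ (m + 1 - (i : ℕ))) •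
        (ρ (Fin.snoc (fun j : Fin m => x (i.succAbove j)) (y 0)) ∘ₗ
          ρ (Fin.snoc (fun j : Fin m => y j.succ) (x i)))) + ρ x ∘ₗ ρ y

/-- An `n`-cocycle (`n = m + 2`) on an `n`-BiHom-Lie algebra `L` with values in a
representation `R`. -/
def IsNCocycle {K : Type u} [Field K] {m : ℕ} {g : Type v} {V : Type w}
    [AddCommGroup g] [Module K g] [AddCommGroup V] [Module K V]
    (L : NBiHomLie K (m + 1) g) (R : NRep L V)
    (θ : (Fin (m + 2) → g) → V) : Prop :=
  (∀ x, R.αV (θ x) = θ fun i => L.α (x i)) ∧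
  (∀ x, R.βV (θ x) = θ fun i => L.β (x i)) ∧
  (∀ (x : Fin (m + 2) → g) (i j : Fin (m + 2)), (i : ℕ) + 1 = (j : ℕ) →
    θ (fun k => L.β (x k)) = - θ (fun k => L.β (x (Equiv.swap i j k)))) ∧
  (∀ (x : Fin (m + 1) → g) (y : Fin (m + 2) → g),
    θ (Fin.snoc (fun i => L.β (L.β (x i))) (L.br (twMap ⇑L.α ⇑L.β y))) +
        R.ρ (fun i => L.β (L.β (x i))) (θ (twMap ⇑L.α ⇑L.β y)) =
      ∑ k : Fin (m + 2), ((-1 : K) ^ (m + 1 - (k : ℕ))) •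
        (θ (Fin.snoc (fun i : Fin (m + 1) => L.β (L.β (y (k.succAbove i))))
              (L.br (twMap ⇑L.α ⇑L.β (Fin.snoc x (y k))))) +
          R.ρ (fun i => L.β (L.β (y (k.succAbove i))))
            (θ (twMap ⇑L.α ⇑L.β (Fin.snoc x (y k))))))

/-- An `n`-cocycle (`n = m + 2`) with values in the coadjoint representation
`ad*(x₁,…,xₙ₋₁)(f) = - f ∘ ad(x₁,…,xₙ₋₁)` on the dual space `g*`. -/
def IsCoadCocycle {K : Type u} [Field K] {m : ℕ} {g : Type v}
    [AddCommGroup g] [Module K g] (L : NBiHomLie K (m + 1) g)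
    (θ : (Fin (m + 2) → g) → Module.Dual K g) : Prop :=
  (∀ (x : Fin (m + 2) → g) (z : g), θ x (L.α z) = θ (fun i => L.α (x i)) z) ∧
  (∀ (x : Fin (m + 2) → g) (z : g), θ x (L.β z) = θ (fun i => L.β (x i)) z) ∧
  (∀ (x : Fin (m + 2) → g) (i j : Fin (m + 2)), (i : ℕ) + 1 = (j : ℕ) →
    θ (fun k => L.β (x k)) = - θ (fun k => L.β (x (Equiv.swap i j k)))) ∧
  (∀ (x : Fin (m + 1) → g) (y : Fin (m + 2) → g) (z : g),
    θ (Fin.snoc (fun i => L.β (L.β (x i))) (L.br (twMap ⇑L.α ⇑L.β y))) z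
        - θ (twMap ⇑L.α ⇑L.β y) (L.br (Fin.snoc (fun i => L.β (L.β (x i))) z)) =
      ∑ k : Fin (m + 2), ((-1 : K) ^ (m + 1 - (k : ℕ))) •
        (θ (Fin.snoc (fun i : Fin (m + 1) => L.β (L.β (y (k.succAbove i))))
              (L.br (twMap ⇑L.α ⇑L.β (Fin.snoc x (y k))))) z
          - θ (twMap ⇑L.α ⇑L.β (Fin.snoc x (y k)))
              (L.br (Fin.snoc (fun i => L.β (L.β (y (k.succAbove i)))) z))))

/-- `S` is the `T*_θ`-extension of the `n`-BiHom-Lie algebra `L` (`n = m + 2`) by the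
cocycle `θ`, built from the coadjoint representation. -/
def IsTStarExt {K : Type u} [Field K] {m : ℕ} {g : Type v}
    [AddCommGroup g] [Module K g] (L : NBiHomLie K (m + 1) g)
    (θ : (Fin (m + 2) → g) → Module.Dual K g)
    (S : NBiHomLie K (m + 1) (g × Module.Dual K g)) : Prop :=
  (∀ p : g × Module.Dual K g, S.α p = (L.α p.1, p.2 ∘ₗ L.α)) ∧
  (∀ p : g × Module.Dual K g, S.β p = (L.β p.1, p.2 ∘ₗ L.β)) ∧
  (∀ z : Fin (m + 2) → g × Module.Dual K g, (S.br z).1 = L.br fun i => (z i).1) ∧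
  (∀ (z : Fin (m + 2) → g × Module.Dual K g) (w : g),
    (S.br z).2 w = θ (fun i => (z i).1) w
      + (∑ i : Fin (m + 1), ((-1 : K) ^ (m + 1 - (i : ℕ))) •
          (- (z i.castSucc).2 (Function.invFun ⇑L.β (L.α (L.br
              (Fin.snoc (Fin.snoc (fun j : Fin m => (z ((i.succAbove j).castSucc)).1)
                (Function.invFun ⇑L.α (L.β ((z (Fin.last (m + 1))).1)))) w))))))
      + (- (z (Fin.last (m + 1))).2
            (L.br (Fin.snoc (fun j : Fin (m + 1) => (z j.castSucc).1) w))))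
/-- The derived series of an `n`-BiHom-Lie algebra (`n = m + 1`):
`g⁽⁰⁾ = g`, `g⁽ᵖ⁺¹⁾ = [g⁽ᵖ⁾, …, g⁽ᵖ⁾, g]`. -/
def nbhlDerivedSeries {K : Type u} [Field K] {m : ℕ} {g : Type v} [AddCommGroup g] [Module K g]
    (L : NBiHomLie K m g) : ℕ → Submodule K g
  | 0 => ⊤
  | p + 1 => Submodule.span K
      {z | ∃ (a : Fin m → g) (b : g), (∀ i, a i ∈ nbhlDerivedSeries L p) ∧ z = L.br (Fin.snoc a b)}

/-- The central descending series of an `n`-BiHom-Lie algebra (`n = m + 1`):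
`g⁰ = g`, `gᵖ⁺¹ = [gᵖ, g, …, g]`. -/
def nbhlCentralSeries {K : Type u} [Field K] {m : ℕ} {g : Type v} [AddCommGroup g] [Module K g]
    (L : NBiHomLie K m g) : ℕ → Submodule K g
  | 0 => ⊤
  | p + 1 => Submodule.span K
      {z | ∃ (a : g) (b : Fin m → g), a ∈ nbhlCentralSeries L p ∧ z = L.br (Fin.cons a b)}

/-- `(L, B)` is a quadratic `n`-BiHom-Lie algebra (`n = m + 1`): the bilinear form `B` is
nondegenerate, symmetric, `αβ`-invariant and `α`, `β` are `B`-symmetric. -/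
def IsQuadratic {K : Type u} [Field K] {m : ℕ} {E : Type v} [AddCommGroup E] [Module K E]
    (L : NBiHomLie K m E) (B : E → E → K) : Prop :=
  (∀ x, (∀ y, B x y = 0) → x = 0) ∧
  (∀ x y, B x y = B y x) ∧
  (∀ (x : Fin m → E) (u v : E),
    B (L.br (twMap ⇑L.α ⇑L.β (Fin.snoc x u))) (L.α v) =
      - B (L.α u) (L.br (twMap ⇑L.α ⇑L.β (Fin.snoc x v)))) ∧
  (∀ x y, B (L.α x) y = B x (L.α y)) ∧
  (∀ x y, B (L.β x) y = B x (L.β y))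

/-- `f` is a `1`-cochain of the `n`-BiHom-Lie algebra `L`. -/
def IsCochain1 {K : Type u} [Field K] {m : ℕ} {g : Type v} [AddCommGroup g] [Module K g]
    (L : NBiHomLie K m g) (f : g → g) : Prop :=
  (∀ z, f (L.α z) = L.α (f z)) ∧ (∀ z, f (L.β z) = L.β (f z))

/-- `c` is a `2`-cochain of the `n`-BiHom-Lie algebra `L` (`n = m + 1`). -/
def IsCochain2 {K : Type u} [Field K] {m : ℕ} {g : Type v} [AddCommGroup g] [Module K g]
    (L : NBiHomLie K m g) (c : (Fin (m + 1) → g) → g) : Prop :=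
  (∀ x, L.α (c x) = c fun i => L.α (x i)) ∧ (∀ x, L.β (c x) = c fun i => L.β (x i))

/-- `d` is a `3`-cochain of the `n`-BiHom-Lie algebra `L` (`n = m + 1`). -/
def IsCochain3 {K : Type u} [Field K] {m : ℕ} {g : Type v} [AddCommGroup g] [Module K g]
    (L : NBiHomLie K m g) (d : (Fin m → g) → (Fin (m + 1) → g) → g) : Prop :=
  (∀ x y, L.α (d x y) = d (fun i => L.α (x i)) fun i => L.α (y i)) ∧
  (∀ x y, L.β (d x y) = d (fun i => L.β (x i)) fun i => L.β (y i))

/-- The first coboundary operator `δ¹` of an `n`-BiHom-Lie algebra (`n = m + 1`). -/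
def delta1 {K : Type u} [Field K] {m : ℕ} {g : Type v} [AddCommGroup g] [Module K g]
    (L : NBiHomLie K m g) (f : g → g) : (Fin (m + 1) → g) → g :=
  fun x => - f (L.br x) + ∑ i : Fin (m + 1), L.br (Function.update x i (f (x i)))

/-- The second coboundary operator `δ²` of an `n`-BiHom-Lie algebra (`n = m + 1`). -/
def delta2 {K : Type u} [Field K] {m : ℕ} {g : Type v} [AddCommGroup g] [Module K g]
    (L : NBiHomLie K m g) (c : (Fin (m + 1) → g) → g) :
    (Fin m → g) → (Fin (m + 1) → g) → g :=
  fun x y =>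
    L.br (Fin.snoc (fun i => L.β (L.β (x i))) (c (twMap ⇑L.α ⇑L.β y))) +
      c (Fin.snoc (fun i => L.β (L.β (x i))) (L.br (twMap ⇑L.α ⇑L.β y))) -
      ∑ i : Fin (m + 1), ((-1 : K) ^ (m - (i : ℕ))) •
        (L.br (Fin.snoc (fun j : Fin m => L.β (L.β (y (i.succAbove j))))
            (c (twMap ⇑L.α ⇑L.β (Fin.snoc x (y i))))) +
          c (Fin.snoc (fun j : Fin m => L.β (L.β (y (i.succAbove j))))
            (L.br (twMap ⇑L.α ⇑L.β (Fin.snoc x (y i))))))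

/-- `F` is a one-parameter formal deformation `f_t = Σ_p F p · tᵖ` of the
`n`-BiHom-Lie algebra `L` (`n = m + 1`). -/
def IsDeformation {K : Type u} [Field K] {m : ℕ} {g : Type v} [AddCommGroup g] [Module K g]
    (L : NBiHomLie K m g) (F : ℕ → MultilinearMap K (fun _ : Fin (m + 1) => g) g) : Prop :=
  (∀ x, F 0 x = L.br x) ∧
  (∀ (p : ℕ) (x : Fin (m + 1) → g), L.α (F p x) = F p fun i => L.α (x i)) ∧
  (∀ (p : ℕ) (x : Fin (m + 1) → g), L.β (F p x) = F p fun i => L.β (x i)) ∧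
  (∀ (l : ℕ) (x : Fin m → g) (y : Fin (m + 1) → g),
    ∑ p ∈ Finset.range (l + 1),
        F p (Fin.snoc (fun i => L.β (L.β (x i))) (F (l - p) (twMap ⇑L.α ⇑L.β y))) =
      ∑ k : Fin (m + 1), ((-1 : K) ^ (m - (k : ℕ))) •
        ∑ p ∈ Finset.range (l + 1),
          F p (Fin.snoc (fun j => L.β (L.β (y (k.succAbove j))))
            (F (l - p) (twMap ⇑L.α ⇑L.β (Fin.snoc x (y k))))))

/-- `Ψ` is a formal automorphism exhibiting the equivalence of the deformations
`F` and `F'` of the `n`-BiHom-Lie algebra `L` (`n = m + 1`). -/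
def IsEquivDeform {K : Type u} [Field K] {m : ℕ} {g : Type v} [AddCommGroup g] [Module K g]
    (L : NBiHomLie K m g) (F F' : ℕ → MultilinearMap K (fun _ : Fin (m + 1) => g) g)
    (Ψ : ℕ → (g →ₗ[K] g)) : Prop :=
  (∀ z, Ψ 0 z = z) ∧
  (∀ (i : ℕ) (z : g), Ψ i (L.α z) = L.α (Ψ i z)) ∧
  (∀ (i : ℕ) (z : g), Ψ i (L.β z) = L.β (Ψ i z)) ∧
  (∀ (l : ℕ) (x : Fin (m + 1) → g),
    ∑ p ∈ Finset.range (l + 1), Ψ p (F (l - p) x) =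
      ∑ p ∈ Finset.range (l + 1),
        ∑ c ∈ Fintype.piFinset (fun _ : Fin (m + 1) => Finset.range (l + 1)),
          if p + ∑ i, c i = l then F' p (fun i => Ψ (c i) (x i)) else 0)
/-- The data of a `T*_θ`-extension: an `n`-BiHom-Lie algebra `B` (`n = m + 2`), an
`n`-cocycle `θ : Bⁿ → B*` for the coadjoint representation satisfying the symmetry
condition, and the resulting quadratic `n`-BiHom-Lie algebra structure on `B ⊕ B*`. -/
structure TStarExtData (K : Type u) [Field K] (m : ℕ) where
  B : Type v
  [addB : AddCommGroup B]
  [modB : Module K B]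
  LB : NBiHomLie K (m + 1) B
  θ : MultilinearMap K (fun _ : Fin (m + 2) => B) (Module.Dual K B)
  hθ : IsCoadCocycle LB ⇑θ
  hθsym : ∀ (x : Fin (m + 1) → B) (u v : B),
    θ (twMap ⇑LB.α ⇑LB.β (Fin.snoc x u)) (LB.α v) +
      θ (twMap ⇑LB.α ⇑LB.β (Fin.snoc x v)) (LB.α u) = 0
  S : NBiHomLie K (m + 1) (B × Module.Dual K B)
  hS : IsTStarExt LB ⇑θ S

attribute [instance] TStarExtData.addB TStarExtData.modB

/-- `twMap` applied to a `snoc`. -/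
lemma twMap_snoc' {g : Type v} (a b : g → g) {m : ℕ} (f : Fin m → g) (c : g) :
    twMap a b (Fin.snoc f c) = Fin.snoc (fun j => b (f j)) (a c) := by
  funext i
  rcases eq_or_ne i (Fin.last _) with h | h
  · subst h; simp [twMap]
  · obtain ⟨j, rfl⟩ := Fin.exists_castSucc_eq.2 h
    simp [twMap, (Fin.castSucc_lt_last j).ne]

/-- **Twisting a representation of an `n`-Lie algebra.** Let `(V,ρ)` be a representation
of the `n`-Lie algebra `(g,[·,…,·])` (here `n = m + 2`), let `α, β` be commuting algebra
morphisms of `g` and `α_V, β_V` commuting linear maps of `V` compatible with `ρ`. Then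
`(V, ρ̃ = β_V ∘ ρ, α_V, β_V)` is a representation of the `n`-BiHom-Lie algebra
`(g, [·,…,·]_{α,β}, α, β)` obtained by the Yau twist. -/
theorem twisted_representation {K : Type u} [Field K] {m : ℕ} {g : Type v} {V : Type w}
    [AddCommGroup g] [Module K g] [AddCommGroup V] [Module K V]
    (L0 : NLie K (m + 1) g) (R0 : NLieRep L0 V)
    (α β : g →ₗ[K] g) (αV βV : V →ₗ[K] V)
    (hα : ∀ x : Fin (m + 2) → g, α (L0.br x) = L0.br fun i => α (x i))
    (hβ : ∀ x : Fin (m + 2) → g, β (L0.br x) = L0.br fun i => β (x i))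
    (hcomm : ∀ z, α (β z) = β (α z))
    (hcommV : ∀ v, αV (βV v) = βV (αV v))
    (hαV : ∀ x : Fin (m + 1) → g, αV ∘ₗ R0.ρ x = R0.ρ (fun i => α (x i)) ∘ₗ αV)
    (hβV : ∀ x : Fin (m + 1) → g, βV ∘ₗ R0.ρ x = R0.ρ (fun i => β (x i)) ∘ₗ βV)
    (L' : NBiHomLie K (m + 1) g) (hL'α : L'.α = α) (hL'β : L'.β = β)
    (hL'br : ∀ x : Fin (m + 2) → g, L'.br x = L0.br (twMap ⇑β ⇑α x)) :
    ∃ R : NRep L' V, R.αV = αV ∧ R.βV = βV ∧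
      ∀ x : Fin (m + 1) → g, R.ρ x = βV ∘ₗ R0.ρ x := by
  -- pointwise versions of the compatibility hypotheses
  have hav : ∀ (z : Fin (m + 1) → g) (v : V),
      R0.ρ (fun i => α (z i)) (αV v) = αV (R0.ρ z v) :=
    fun z v => (LinearMap.congr_fun (hαV z) v).symm
  have hbv : ∀ (z : Fin (m + 1) → g) (v : V),
      R0.ρ (fun i => β (z i)) (βV v) = βV (R0.ρ z v) :=
    fun z v => (LinearMap.congr_fun (hβV z) v).symm
  refine ⟨{ ρ := (LinearMap.llcomp K V V V βV).compMultilinearMap R0.ρ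
            αV := αV
            βV := βV
            rep1 := ?_
            rep2 := ?_
            rep3 := ?_
            rep4 := ?_ }, rfl, rfl, fun x => rfl⟩
  · intro x
    ext v
    simp only [hL'α, LinearMap.compMultilinearMap_apply, LinearMap.llcomp_apply,
      LinearMap.comp_apply]
    rw [hav, hcommV]
  · intro x
    ext v
    simp only [hL'β, LinearMap.compMultilinearMap_apply, LinearMap.llcomp_apply,
      LinearMap.comp_apply]
    rw [hbv]
  · intro x y
    simp only [hL'α, hL'β]
    ext v
    have e1 : (fun i => α (β (x i))) = fun i => β (α (x i)) := funext fun i => hcomm _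
    have key := LinearMap.congr_fun (R0.repa (fun i => α (x i)) y) v
    simp only [LinearMap.sub_apply, LinearMap.comp_apply, LinearMap.sum_apply] at key
    simp only [LinearMap.compMultilinearMap_apply, LinearMap.llcomp_apply,
      LinearMap.sub_apply, LinearMap.comp_apply, LinearMap.sum_apply, e1, hbv]
    rw [← map_sub, ← map_sub, key, map_sum, map_sum]
    refine Finset.sum_congr rfl fun i _ => ?_
    have hbr : L0.br (twMap ⇑β ⇑α (Fin.snoc (fun j => β (x j)) (y i))) =
        β (L0.br (Fin.snoc (fun j => α (x j)) (y i))) := by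
      rw [twMap_snoc', hβ]
      congr 1
      funext k
      refine Fin.lastCases ?_ (fun k => ?_) k <;> simp [hcomm]
    have e2 : Function.update (fun j => β (y j)) i
        (L0.br (twMap ⇑β ⇑α (Fin.snoc (fun j => β (x j)) (y i)))) =
        fun j => β (Function.update y i (L0.br (Fin.snoc (fun j => α (x j)) (y i))) j) := by
      funext j
      rw [hbr]
      exact (Function.apply_update (fun _ z => β z) y i _ j).symm
    rw [hL'br, e2, hbv]
  · intro x y
    simp only [hL'α, hL'β]
    ext v
    have key := LinearMap.congr_fun (R0.repb (fun i => α (x i)) y) v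
    simp only [LinearMap.add_apply, LinearMap.comp_apply, LinearMap.sum_apply,
      LinearMap.smul_apply] at key
    have hbr0 : L'.br (Fin.snoc (fun j => β (x j)) (y 0)) =
        β (L0.br (Fin.snoc (fun j => α (x j)) (y 0))) := by
      rw [hL'br, twMap_snoc', hβ]
      congr 1
      funext k
      refine Fin.lastCases ?_ (fun k => ?_) k <;> simp [hcomm]
    have e0 : (Fin.snoc (fun j : Fin m => β (y j.succ))
        (L'.br (Fin.snoc (fun j => β (x j)) (y 0))) : Fin (m+1) → g) =
        fun j => β ((Fin.snoc (fun j : Fin m => y j.succ)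
          (L0.br (Fin.snoc (fun j => α (x j)) (y 0))) : Fin (m+1) → g) j) := by
      rw [hbr0]
      funext j
      refine Fin.lastCases ?_ (fun j => ?_) j <;> simp
    simp only [LinearMap.compMultilinearMap_apply, LinearMap.llcomp_apply,
      LinearMap.add_apply, LinearMap.comp_apply, LinearMap.sum_apply,
      LinearMap.smul_apply, e0, hbv, key, map_add, map_sum, map_smul]
    congr 1
    refine Finset.sum_congr rfl fun i _ => ?_
    have e3 : (Fin.snoc (fun j : Fin m => α (β (x (i.succAbove j)))) (β (y 0))
        : Fin (m+1) → g) =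
        fun j => β ((Fin.snoc (fun j : Fin m => α (x (i.succAbove j))) (y 0)
          : Fin (m+1) → g) j) := by
      funext j
      refine Fin.lastCases ?_ (fun j => ?_) j <;> simp [hcomm]
    rw [e3, hbv]
    rw [show (fun i => α (β (x i))) = fun i => β (α (x i)) from funext fun i => hcomm _, hbv]
end

section
/- Let (g, [·,...,·], α, β) be an n-BiHom-Lie algebra such that the T*_θ-extension (g ⊕ g*, [·,...,·]_θ, α+α̃, β+β̃) is an n-BiHom-Lie algebra, and let q_g be the symmetric bilinear form on g ⊕ g* defined by q_g(x+f, y+h) = f(y) + h(x). Then (g ⊕ g*, q_g, α+α̃, β+β̃) is a quadratic n-BiHom-Lie algebra if and only if θ(β(x₁),...,β(x_{n−1}),α(xₙ))(α(x_{n+1})) + θ(β(x₁),...,β(x_{n−1}),α(x_{n+1}))(α(xₙ)) = 0 for all x₁,...,x_{n+1} ∈ g. -/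
open Function Finset Module

universe u v w

lemma twMap_snoc'_s11 {γ : Type*} (a b : γ → γ) {k : ℕ} (x : Fin k → γ) (u : γ) :
    twMap a b (Fin.snoc x u) = Fin.snoc (fun i => b (x i)) (a u) := by
  funext i
  refine Fin.lastCases ?_ (fun i => ?_) i
  · simp [twMap]
  · simp [twMap, (Fin.castSucc_lt_last i).ne]

lemma snoc_swap_last {γ : Type*} {k : ℕ} (a : Fin k → γ) (u v : γ) :
    (Fin.snoc (Fin.snoc a u) v : Fin (k + 2) → γ) ∘
        Equiv.swap ((Fin.last k).castSucc) (Fin.last (k + 1)) =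
      Fin.snoc (Fin.snoc a v) u := by
  funext i
  refine Fin.lastCases ?_ (fun i => ?_) i
  · simp [Equiv.swap_apply_right]
  · refine Fin.lastCases ?_ (fun i => ?_) i
    · simp [Equiv.swap_apply_left]
    · have h1 : i.castSucc.castSucc ≠ (Fin.last k).castSucc := by
        simp [Fin.ext_iff]; omega
      have h2 : i.castSucc.castSucc ≠ Fin.last (k + 1) := by
        simp [Fin.ext_iff]; omega
      simp [Function.comp, Equiv.swap_apply_of_ne_of_ne h1 h2]

/-- **Quadratic `T*_θ`-extensions.** Let `(g,[·,…,·],α,β)` be an `n`-BiHom-Lie algebra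
(`n = m + 2`) whose `T*_θ`-extension `S` on `g ⊕ g*` is again an `n`-BiHom-Lie algebra,
and let `q(x+f, y+h) = f(y) + h(x)`. Then `(g ⊕ g*, q, α+α̃, β+β̃)` is a quadratic
`n`-BiHom-Lie algebra if and only if
`θ(β(x₁),…,β(xₙ₋₁),α(xₙ))(α(xₙ₊₁)) + θ(β(x₁),…,β(xₙ₋₁),α(xₙ₊₁))(α(xₙ)) = 0`
for all `x₁,…,xₙ₊₁ ∈ g`. -/
theorem tstar_extension_quadratic_iff {K : Type u} [Field K] {m : ℕ} {g : Type v}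
    [AddCommGroup g] [Module K g] (L : NBiHomLie K (m + 1) g)
    (hα : Function.Bijective ⇑L.α) (hβ : Function.Bijective ⇑L.β)
    (θ : MultilinearMap K (fun _ : Fin (m + 2) => g) (Module.Dual K g))
    (hθ : IsCoadCocycle L ⇑θ)
    (S : NBiHomLie K (m + 1) (g × Module.Dual K g)) (hS : IsTStarExt L ⇑θ S) :
    IsQuadratic S (fun p p' : g × Module.Dual K g => p.2 p'.1 + p'.2 p.1) ↔
      ∀ (x : Fin (m + 1) → g) (u v : g),
        θ (twMap ⇑L.α ⇑L.β (Fin.snoc x u)) (L.α v) +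
          θ (twMap ⇑L.α ⇑L.β (Fin.snoc x v)) (L.α u) = 0 := by
  obtain ⟨hSα, hSβ, hS1, hS2⟩ := hS
  have hinvα : ∀ t, L.α (Function.invFun ⇑L.α t) = t := fun t =>
    Function.rightInverse_invFun hα.2 t
  have hinvβ : ∀ t, L.β (Function.invFun ⇑L.β t) = t := fun t =>
    Function.rightInverse_invFun hβ.2 t
  have hinv1 : ∀ t : g, Function.invFun ⇑L.α (L.β (L.α t)) = L.β t := fun t =>
    hα.1 (by rw [hinvα, L.comm])
  have hZc : ∀ (x : Fin (m + 1) → g × Module.Dual K g) (u : g × Module.Dual K g)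
      (i : Fin (m + 1)),
      twMap ⇑S.α ⇑S.β (Fin.snoc x u) i.castSucc = (L.β (x i).1, (x i).2 ∘ₗ L.β) := by
    intro x u i
    simp only [twMap, (Fin.castSucc_lt_last i).ne, if_false, Fin.snoc_castSucc, hSβ]
  have hZl : ∀ (x : Fin (m + 1) → g × Module.Dual K g) (u : g × Module.Dual K g),
      twMap ⇑S.α ⇑S.β (Fin.snoc x u) (Fin.last (m + 1)) = (L.α u.1, u.2 ∘ₗ L.α) := by
    intro x u
    simp only [twMap, if_true, eq_self_iff_true, Fin.snoc_last, hSα]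
  have hfst : ∀ (x : Fin (m + 1) → g × Module.Dual K g) (u : g × Module.Dual K g),
      (fun i => ((twMap ⇑S.α ⇑S.β (Fin.snoc x u)) i).1) =
        twMap ⇑L.α ⇑L.β (Fin.snoc (fun i => (x i).1) u.1) := by
    intro x u
    funext i
    refine Fin.lastCases ?_ (fun i => ?_) i
    · simp [twMap, hSα]
    · simp [twMap, (Fin.castSucc_lt_last i).ne, hSβ]
  have hW' : ∀ (a : Fin m → g) (p q : g),
      twMap ⇑L.α ⇑L.β (Fin.snoc (Fin.snoc a p) q) =
        Fin.snoc (Fin.snoc (fun j => L.β (a j)) (L.β p)) (L.α q) := by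
    intro a p q
    have hc : (fun i => L.β ((Fin.snoc a p : Fin (m + 1) → g) i)) = Fin.snoc (fun j => L.β (a j)) (L.β p) := by
      funext i
      refine Fin.lastCases ?_ (fun i => ?_) i <;> simp
    rw [twMap_snoc'_s11, hc]
  have hskew2 : ∀ (a : Fin m → g) (p q : g),
      L.br (Fin.snoc (Fin.snoc (fun j => L.β (a j)) (L.β p)) (L.α q)) =
        - L.br (Fin.snoc (Fin.snoc (fun j => L.β (a j)) (L.β q)) (L.α p)) := by
    intro a p q
    rw [← hW' a p q, ← hW' a q p]
    have h := L.skew (Fin.snoc (Fin.snoc a p) q) ((Fin.last m).castSucc)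
      (Fin.last (m + 1)) (by simp)
    rw [snoc_swap_last] at h
    exact h
  have e1 : ∀ (x : Fin (m + 1) → g × Module.Dual K g) (u : g × Module.Dual K g) (w0 : g),
      (S.br (twMap ⇑S.α ⇑S.β (Fin.snoc x u))).2 w0 =
        θ (twMap ⇑L.α ⇑L.β (Fin.snoc (fun i => (x i).1) u.1)) w0
        + (∑ i : Fin (m + 1), ((-1 : K) ^ (m + 1 - (i : ℕ))) •
            (- (x i).2 (L.α (L.br (Fin.snoc
              (Fin.snoc (fun j : Fin m => L.β ((x (i.succAbove j)).1)) (L.β u.1)) w0)))))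
        + (- u.2 (L.α (L.br (Fin.snoc (fun j : Fin (m + 1) => L.β ((x j).1)) w0)))) := by
    intro x u w0
    rw [hS2]
    simp only [hZc, hZl, hfst, hinv1, LinearMap.coe_comp, Function.comp_apply, hinvβ]
  have key : ∀ (x : Fin (m + 1) → g × Module.Dual K g) (u v : g × Module.Dual K g),
      ((S.br (twMap ⇑S.α ⇑S.β (Fin.snoc x u))).2 (S.α v).1
          + (S.α v).2 (S.br (twMap ⇑S.α ⇑S.β (Fin.snoc x u))).1)
        + ((S.α u).2 (S.br (twMap ⇑S.α ⇑S.β (Fin.snoc x v))).1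
          + (S.br (twMap ⇑S.α ⇑S.β (Fin.snoc x v))).2 (S.α u).1) =
      θ (twMap ⇑L.α ⇑L.β (Fin.snoc (fun i => (x i).1) u.1)) (L.α v.1)
        + θ (twMap ⇑L.α ⇑L.β (Fin.snoc (fun i => (x i).1) v.1)) (L.α u.1) := by
    intro x u v
    have E3 : (S.br (twMap ⇑S.α ⇑S.β (Fin.snoc x u))).1 =
        L.br (Fin.snoc (fun j : Fin (m + 1) => L.β ((x j).1)) (L.α u.1)) := by
      rw [hS1, hfst, twMap_snoc'_s11]
    have E4 : (S.br (twMap ⇑S.α ⇑S.β (Fin.snoc x v))).1 =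
        L.br (Fin.snoc (fun j : Fin (m + 1) => L.β ((x j).1)) (L.α v.1)) := by
      rw [hS1, hfst, twMap_snoc'_s11]
    have hsum : (∑ i : Fin (m + 1), ((-1 : K) ^ (m + 1 - (i : ℕ))) •
            (- (x i).2 (L.α (L.br (Fin.snoc
              (Fin.snoc (fun j : Fin m => L.β ((x (i.succAbove j)).1)) (L.β u.1))
                (L.α v.1))))))
        + (∑ i : Fin (m + 1), ((-1 : K) ^ (m + 1 - (i : ℕ))) •
            (- (x i).2 (L.α (L.br (Fin.snoc
              (Fin.snoc (fun j : Fin m => L.β ((x (i.succAbove j)).1)) (L.β v.1))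
                (L.α u.1)))))) = 0 := by
      rw [← Finset.sum_add_distrib]
      refine Finset.sum_eq_zero fun i _ => ?_
      rw [hskew2 (fun j => (x (i.succAbove j)).1) u.1 v.1]
      simp only [map_neg, smul_eq_mul, mul_neg, neg_neg]
      ring
    rw [e1 x u (S.α v).1, e1 x v (S.α u).1, E3, E4, hSα u, hSα v]
    simp only [LinearMap.coe_comp, Function.comp_apply]
    linear_combination hsum
  constructor
  · intro hQ x u v
    have h3 := hQ.2.2.1 (fun i => (x i, (0 : Module.Dual K g))) (u, 0) (v, 0)
    have hk := key (fun i => (x i, (0 : Module.Dual K g))) (u, 0) (v, 0)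
    beta_reduce at h3
    have hk2 : _ = θ (twMap ⇑L.α ⇑L.β (Fin.snoc x u)) (L.α v) +
        θ (twMap ⇑L.α ⇑L.β (Fin.snoc x v)) (L.α u) := hk
    rw [← hk2]
    linear_combination h3
  · intro hsym
    refine ⟨?_, fun p q => add_comm _ _, ?_, ?_, ?_⟩
    · intro p hp
      have h2 : p.2 = 0 := by
        ext y
        simpa using hp (y, 0)
      have h1 : p.1 = 0 := by
        refine (Module.forall_dual_apply_eq_zero_iff K p.1).mp fun φ => ?_
        simpa [h2] using hp (0, φ)
      exact Prod.ext h1 h2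
    · intro x u v
      have hk := key x u v
      rw [hsym (fun i => (x i).1) u.1 v.1] at hk
      beta_reduce
      linear_combination hk
    · intro p q
      simp [hSα]
    · intro p q
      simp [hSβ]
end
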